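/- Fix β > 0, t > 0 and x₀ ∈ ℝ. Then 1 + 2β e^{-β|x₀| + β²t/2} ∫_0^∞ e^{-βx} Φ((βt - |x₀| - x)/√t) dx = 1 + 2 e^{-β|x₀| + β²t/2} Φ(β√t - |x₀|/√t) - 2 Φ(-|x₀|/√t). -/

import Mathlib

open MeasureTheory Real Set Filter Topology

/-- standard normal CDF -/
noncomputable def Phi (z : ℝ) : ℝ := ∫ u in Set.Iic z, (Real.sqrt (2 * π))⁻¹ * Real.exp (-u^2 / 2)

noncomputable def gden (u : ℝ) : ℝ := (Real.sqrt (2 * π))⁻¹ * Real.exp (-u^2 / 2)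

lemma gden_cont : Continuous gden := by
  unfold gden; fun_prop

lemma gden_nonneg (u : ℝ) : 0 ≤ gden u := by
  unfold gden; positivity

lemma gden_le (u : ℝ) : gden u ≤ (Real.sqrt (2 * π))⁻¹ := by
  unfold gden
  have h1 : Real.exp (-u^2/2) ≤ 1 := Real.exp_le_one_iff.mpr (by nlinarith [sq_nonneg u])
  have h2 : (0:ℝ) ≤ (Real.sqrt (2*π))⁻¹ := inv_nonneg.mpr (Real.sqrt_nonneg _)
  nlinarith [Real.exp_pos (-u^2/2)]

lemma gden_integrable : Integrable gden := by
  have h : gden = fun u => (Real.sqrt (2 * π))⁻¹ * Real.exp (-(1/2 : ℝ) * u ^ 2) := by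
    funext u; unfold gden; congr 1; ring_nf
  rw [h]
  exact (integrable_exp_neg_mul_sq (by norm_num : (0:ℝ) < 1/2)).const_mul _

lemma gden_integral : ∫ u, gden u = 1 := by
  have h : gden = fun u => (Real.sqrt (2 * π))⁻¹ * Real.exp (-(1/2 : ℝ) * u ^ 2) := by
    funext u; unfold gden; congr 1; ring_nf
  rw [h, integral_const_mul, integral_gaussian]
  rw [show (π / (1/2 : ℝ)) = 2 * π by ring]
  rw [inv_mul_cancel₀]
  positivity

lemma Phi_eq (z : ℝ) : Phi z = ∫ u in Iic z, gden u := rfl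

lemma Phi_nonneg (z : ℝ) : 0 ≤ Phi z := by
  rw [Phi_eq]; exact setIntegral_nonneg measurableSet_Iic fun u _ => gden_nonneg u

lemma Phi_le_one (z : ℝ) : Phi z ≤ 1 := by
  rw [Phi_eq, ← gden_integral]
  exact setIntegral_le_integral gden_integrable (Eventually.of_forall gden_nonneg)

lemma hasDerivAt_Phi (z : ℝ) : HasDerivAt Phi (gden z) z := by
  have hPhi : Phi = fun z => Phi 0 + ∫ u in (0:ℝ)..z, gden u := by
    funext z
    rw [Phi_eq, Phi_eq, ← intervalIntegral.integral_Iic_sub_Iic gden_integrable.integrableOn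
      gden_integrable.integrableOn]
    ring
  rw [hPhi]
  exact ((gden_cont.integral_hasStrictDerivAt 0 z).hasDerivAt).const_add _

lemma Phi_cont : Continuous Phi :=
  continuous_iff_continuousAt.2 fun z => (hasDerivAt_Phi z).continuousAt

lemma integral_shift (f : ℝ → ℝ) (c d : ℝ) :
    ∫ x in Ioi c, f (x + d) = ∫ x in Ioi (c + d), f x := by
  have A : MeasurePreserving (fun x : ℝ => x + d) volume volume :=
    measurePreserving_add_right volume d
  have B : MeasurableEmbedding (fun x : ℝ => x + d) :=
    (Homeomorph.addRight d).measurableEmbedding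
  have := A.setIntegral_preimage_emb B f (Ioi (c + d))
  rw [show (fun x : ℝ => x + d) ⁻¹' Ioi (c + d) = Ioi c by
    ext x; simp [mem_Ioi]] at this
  exact this

lemma gden_tail (z : ℝ) : ∫ x in Ioi z, gden x = Phi (-z) := by
  rw [Phi_eq, ← neg_neg z, ← integral_comp_neg_Iic]
  rw [neg_neg]
  congr 1 with x
  unfold gden
  rw [neg_sq]

lemma gden_shifted_scaled (a s : ℝ) (hs : 0 < s) :
    ∫ x in Ioi (0:ℝ), gden ((x + a)/s) = s * Phi (-(a/s)) := by
  have h1 : (fun x : ℝ => gden ((x + a)/s)) = fun x => (fun y => gden (y + a/s)) (x * s⁻¹) := by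
    funext x; congr 1; field_simp
  rw [h1, MeasureTheory.integral_comp_mul_right_Ioi (fun y => gden (y + a/s)) 0 (inv_pos.mpr hs),
    zero_mul, integral_shift, zero_add, gden_tail, inv_inv, smul_eq_mul]

lemma key (β s a : ℝ) (hβ : 0 < β) (hs : 0 < s) :
    β * ∫ x in Ioi (0:ℝ), Real.exp (-β * x) * Phi ((β * s^2 - a - x) / s)
      = Phi (β * s - a/s) - Real.exp (a*β - β^2*s^2/2) * Phi (-(a/s)) := by
  set c := β * s^2 - a with hc
  set K := Real.exp (a*β - β^2*s^2/2) with hK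
  set F : ℝ → ℝ := fun x => -(Real.exp (-β*x) * Phi ((c - x)/s)) with hF
  set g : ℝ → ℝ := fun x => β * (Real.exp (-β*x) * Phi ((c - x)/s)) with hg
  set h : ℝ → ℝ := fun x => Real.exp (-β*x) * (gden ((c - x)/s) * s⁻¹) with hh
  -- derivative
  have hder : ∀ x : ℝ, HasDerivAt F (g x + h x) x := by
    intro x
    have hinner : HasDerivAt (fun x : ℝ => (c - x)/s) (-1/s) x := by
      simpa using ((hasDerivAt_id x).const_sub c).div_const s
    have hphi := (hasDerivAt_Phi ((c - x)/s)).comp x hinner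
    have h2 : HasDerivAt (fun x : ℝ => -β*x) (-β) x := by
      simpa using (hasDerivAt_id x).const_mul (-β)
    have hexp : HasDerivAt (fun x : ℝ => Real.exp (-β*x)) (Real.exp (-β*x) * (-β)) x :=
      (Real.hasDerivAt_exp _).comp x h2
    have : HasDerivAt (fun y : ℝ => -(Real.exp (-β*y) * Phi ((c - y)/s)))
        (-(Real.exp (-β*x) * (-β) * Phi ((c - x)/s) + Real.exp (-β*x) * (gden ((c - x)/s) * (-1/s)))) x :=
      (hexp.mul hphi).neg
    convert this using 1
    simp only [hg, hh]
    field_simp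
    ring
  -- integrability of h
  have hcont_h : Continuous h := by
    rw [hh]
    exact (Real.continuous_exp.comp (by fun_prop)).mul
      ((gden_cont.comp (by fun_prop)).mul continuous_const)
  have hmeas_h : AEStronglyMeasurable h (volume.restrict (Ioi (0:ℝ))) :=
    hcont_h.aestronglyMeasurable
  have h_int : IntegrableOn h (Ioi (0:ℝ)) := by
    have hGint : IntegrableOn (fun x => ((Real.sqrt (2*π))⁻¹ * s⁻¹) * Real.exp (-β*x))
        (Ioi (0:ℝ)) := (exp_neg_integrableOn_Ioi 0 hβ).const_mul _
    refine Integrable.mono hGint hmeas_h ?_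
    filter_upwards with x
    simp only [hh]
    rw [Real.norm_eq_abs, Real.norm_eq_abs,
      abs_of_nonneg (mul_nonneg (Real.exp_pos _).le
        (mul_nonneg (gden_nonneg _) (inv_nonneg.mpr hs.le))),
      abs_of_nonneg (by positivity)]
    have h1 := gden_le ((c - x)/s)
    have h2 := Real.exp_pos (-β*x)
    have h3 := gden_nonneg ((c - x)/s)
    have hsi : 0 < s⁻¹ := inv_pos.mpr hs
    nlinarith [mul_le_mul_of_nonneg_left h1 (mul_pos h2 hsi).le]
  -- integrability of g
  have hmeas_g : AEStronglyMeasurable g (volume.restrict (Ioi (0:ℝ))) := by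
    apply Continuous.aestronglyMeasurable
    exact continuous_const.mul ((Real.continuous_exp.comp (by fun_prop)).mul
      (Phi_cont.comp (by fun_prop)))
  have g_int : IntegrableOn g (Ioi (0:ℝ)) := by
    have hGint : IntegrableOn (fun x => β * Real.exp (-β*x)) (Ioi (0:ℝ)) :=
      (exp_neg_integrableOn_Ioi 0 hβ).const_mul _
    refine Integrable.mono hGint hmeas_g ?_
    filter_upwards with x
    simp only [hg]
    rw [Real.norm_eq_abs, Real.norm_eq_abs,
      abs_of_nonneg (mul_nonneg hβ.le (mul_nonneg (Real.exp_pos _).le (Phi_nonneg _))),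
      abs_of_nonneg (by positivity)]
    have h1 := Phi_le_one ((c - x)/s)
    have h2 := Phi_nonneg ((c - x)/s)
    have h3 := Real.exp_pos (-β*x)
    nlinarith [mul_le_mul_of_nonneg_left h1 (mul_pos hβ h3).le]
  -- tendsto
  have htend : Tendsto F atTop (𝓝 0) := by
    have hexp0 : Tendsto (fun x : ℝ => Real.exp (-β*x)) atTop (𝓝 0) := by
      have h1 : Tendsto (fun x : ℝ => -(β * x)) atTop atBot :=
        tendsto_neg_atTop_atBot.comp (tendsto_id.const_mul_atTop hβ)
      have h2 := Real.tendsto_exp_atBot.comp h1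
      simpa [Function.comp_def, neg_mul] using h2
    refine tendsto_of_tendsto_of_tendsto_of_le_of_le
      (g := fun x : ℝ => -Real.exp (-β*x)) (h := fun _ : ℝ => (0:ℝ))
      (by simpa only [neg_zero] using hexp0.neg) tendsto_const_nhds ?_ ?_
    · intro x
      have h1 := Phi_le_one ((c - x)/s)
      have h3 := Real.exp_pos (-β*x)
      simp only [hF]
      nlinarith [mul_le_mul_of_nonneg_left h1 h3.le]
    · intro x
      have h2 := Phi_nonneg ((c - x)/s)
      have h3 := Real.exp_pos (-β*x)
      simp only [hF]
      nlinarith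
  -- FTC
  have hFTC : ∫ x in Ioi (0:ℝ), (g x + h x) = 0 - F 0 :=
    integral_Ioi_of_hasDerivAt_of_tendsto (hder 0).continuousAt.continuousWithinAt
      (fun x _ => hder x) (g_int.add h_int) htend
  have hF0 : F 0 = -(Phi (c/s)) := by simp [hF]
  -- value of ∫ h
  have hident : h = fun x => K * (s⁻¹ * gden ((x + a)/s)) := by
    funext x
    simp only [hh, hK]
    unfold gden
    rw [show Real.exp (-β*x) * ((Real.sqrt (2*π))⁻¹ * Real.exp (-((c-x)/s)^2/2) * s⁻¹)
        = (Real.sqrt (2*π))⁻¹ * s⁻¹ * (Real.exp (-β*x) * Real.exp (-((c-x)/s)^2/2)) by ring,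
      ← Real.exp_add,
      show Real.exp (a*β - β^2*s^2/2) * (s⁻¹ * ((Real.sqrt (2*π))⁻¹ * Real.exp (-((x+a)/s)^2/2)))
        = (Real.sqrt (2*π))⁻¹ * s⁻¹ * (Real.exp (a*β - β^2*s^2/2) * Real.exp (-((x+a)/s)^2/2)) by ring,
      ← Real.exp_add]
    congr 1
    rw [hc]
    field_simp
    ring
  have h_val : ∫ x in Ioi (0:ℝ), h x = K * Phi (-(a/s)) := by
    rw [hident]
    rw [MeasureTheory.integral_const_mul, MeasureTheory.integral_const_mul,
      gden_shifted_scaled a s hs]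
    field_simp
  -- value of ∫ g
  have hsplit : ∫ x in Ioi (0:ℝ), (g x + h x) = (∫ x in Ioi (0:ℝ), g x) + ∫ x in Ioi (0:ℝ), h x :=
    integral_add g_int h_int
  have hg_val : ∫ x in Ioi (0:ℝ), g x = Phi (c/s) - K * Phi (-(a/s)) := by
    rw [← h_val]
    have := hFTC
    rw [hsplit, hF0] at this
    linarith
  have harg : c/s = β * s - a/s := by rw [hc]; field_simp
  rw [← harg, ← hg_val, hg, MeasureTheory.integral_const_mul]

theorem stmt_7 (β t : ℝ) (hβ : 0 < β) (ht : 0 < t) (x₀ : ℝ) :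
    1 + 2 * β * Real.exp (-β * |x₀| + β^2 * t / 2) *
        ∫ x in Set.Ioi (0:ℝ), Real.exp (-β * x) * Phi ((β * t - |x₀| - x) / Real.sqrt t)
      = 1 + 2 * Real.exp (-β * |x₀| + β^2 * t / 2) * Phi (β * Real.sqrt t - |x₀| / Real.sqrt t)
        - 2 * Phi (-|x₀| / Real.sqrt t) := by
  have hs : 0 < Real.sqrt t := Real.sqrt_pos.mpr ht
  set a := |x₀| with ha
  set s := Real.sqrt t with hsdef
  have hst : s^2 = t := Real.sq_sqrt ht.le
  have hkey := key β s a hβ hs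
  have hEK : Real.exp (-β*a + β^2*s^2/2) * Real.exp (a*β - β^2*s^2/2) = 1 := by
    rw [← Real.exp_add, show (-β*a + β^2*s^2/2) + (a*β - β^2*s^2/2) = 0 by ring, Real.exp_zero]
  rw [← hst, neg_div]
  linear_combination (2 * Real.exp (-β*a + β^2*s^2/2)) * hkey
    - (2 * Phi (-(a/s))) * hEK
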